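/- Let d ≥ 2 and n ≥ 2, and let G be an ordered leader-first-follower (ordered LFF) directed graph on vertices {1, …, n}. Let g* assign to each directed edge (i, j) of G a unit vector g*_{ij} ∈ ℝ^d, and suppose g* is realizable by a configuration satisfying: for every vertex i ≥ 3 and any two distinct out-neighbors j, k of i, the target bearings g*_{ij} and g*_{ik} are not parallel. Then the realizing configuration is uniquely determined by the leader's position and the leader–first-follower distance: if p = (p_1, …, p_n) and q = (q_1, …, q_n) are two configurations with p_i ≠ p_j and q_i ≠ q_j for every edge (i, j), both realizing g* (i.e., (p_j − p_i)/‖p_j − p_i‖ = g*_{ij} = (q_j − q_i)/‖q_j − q_i‖ for all edges), and if p_1 = q_1 and ‖p_2 − p_1‖ = ‖q_2 − q_1‖, then p = q. Moreover each position satisfies p_i = (Σ_{(i,j)∈E} P_{g*_{ij}})^{-1}(Σ_{(i,j)∈E} P_{g*_{ij}} p_j) for i ≥ 3, and p_2 = p_1 − ‖p_2 − p_1‖ g*_{21}. -/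
import Mathlib


open RealInnerProductSpace

/-- `bproj g v` is the orthogonal projection of `v` onto the orthogonal
complement of `g`, i.e. `P_g v = v - (⟪g,v⟫/‖g‖²) • g`. -/
noncomputable def bproj {d : ℕ} (g v : EuclideanSpace ℝ (Fin d)) :
    EuclideanSpace ℝ (Fin d) :=
  v - ((⟪g, v⟫ : ℝ) / ‖g‖ ^ 2) • g

/-- A directed graph on `{1, …, n}` (given by its out-neighbor sets `A i`) is
an ordered leader-first-follower graph if: the leader (vertex `0`) has no
outgoing edges; the first follower (vertex `1`) has exactly one outgoing edge,
to the leader; every other vertex has at least two outgoing edges, all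
pointing to vertices with smaller index. -/
def IsOrderedLFF (n : ℕ) (A : Fin n → Finset (Fin n)) : Prop :=
  (∀ i : Fin n, i.val = 0 → A i = ∅) ∧
  (∀ i : Fin n, i.val = 1 → ∀ j : Fin n, j ∈ A i ↔ j.val = 0) ∧
  (∀ i : Fin n, 2 ≤ i.val → 2 ≤ (A i).card ∧ ∀ j ∈ A i, j.val < i.val)

/-- Configuration `p` realizes the bearing assignment `gs` on the graph `A`:
for every directed edge `(i, j)`, `p_i ≠ p_j` and
`(p_j − p_i)/‖p_j − p_i‖ = gs i j`. -/
def RealizesBearings {d n : ℕ} (A : Fin n → Finset (Fin n))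
    (gs : Fin n → Fin n → EuclideanSpace ℝ (Fin d))
    (p : Fin n → EuclideanSpace ℝ (Fin d)) : Prop :=
  ∀ i : Fin n, ∀ j ∈ A i, p i ≠ p j ∧ (‖p j - p i‖)⁻¹ • (p j - p i) = gs i j

lemma bproj_self {d : ℕ} (g : EuclideanSpace ℝ (Fin d)) (hg : g ≠ 0) :
    bproj g g = 0 := by
  unfold bproj
  rw [real_inner_self_eq_norm_sq, div_self (pow_ne_zero 2 (norm_ne_zero_iff.2 hg)),
    one_smul, sub_self]

noncomputable def bprojL {d : ℕ} (g : EuclideanSpace ℝ (Fin d)) :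
    EuclideanSpace ℝ (Fin d) →ₗ[ℝ] EuclideanSpace ℝ (Fin d) where
  toFun v := bproj g v
  map_add' v w := by
    unfold bproj
    rw [inner_add_right, add_div, add_smul]
    abel
  map_smul' c v := by
    unfold bproj
    rw [real_inner_smul_right, RingHom.id_apply, smul_sub, smul_smul, mul_div_assoc]

lemma inner_bproj_self {d : ℕ} (g v : EuclideanSpace ℝ (Fin d)) (hg : ‖g‖ = 1) :
    (⟪v, bproj g v⟫ : ℝ) = ‖v‖ ^ 2 - ⟪g, v⟫ ^ 2 := by
  unfold bproj
  rw [inner_sub_right, real_inner_smul_right, real_inner_self_eq_norm_sq, hg,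
    real_inner_comm v g]
  ring

lemma inner_bproj_nonneg {d : ℕ} (g v : EuclideanSpace ℝ (Fin d)) (hg : ‖g‖ = 1) :
    0 ≤ (⟪v, bproj g v⟫ : ℝ) := by
  rw [inner_bproj_self g v hg]
  have h := abs_real_inner_le_norm g v
  rw [hg, one_mul] at h
  nlinarith [abs_nonneg (⟪g, v⟫ : ℝ), sq_abs (⟪g, v⟫ : ℝ), norm_nonneg v]

lemma sum_bproj_bijective {d : ℕ} {ι : Type*} (s : Finset ι)
    (g : ι → EuclideanSpace ℝ (Fin d)) (hunit : ∀ j ∈ s, ‖g j‖ = 1)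
    {j k : ι} (hj : j ∈ s) (hk : k ∈ s)
    (hnp : ∀ c : ℝ, g k ≠ c • g j) :
    Function.Bijective
      (fun v : EuclideanSpace ℝ (Fin d) => ∑ j ∈ s, bproj (g j) v) := by
  set T : EuclideanSpace ℝ (Fin d) →ₗ[ℝ] EuclideanSpace ℝ (Fin d) :=
    ∑ j ∈ s, bprojL (g j) with hTdef
  have hT : ∀ v, (∑ j ∈ s, bproj (g j) v) = T v := by
    intro v
    rw [hTdef, LinearMap.sum_apply]
    rfl
  have hker : ∀ v, T v = 0 → v = 0 := by
    intro v hv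
    by_contra hv0
    have hsum : ∑ i ∈ s, (⟪v, bproj (g i) v⟫ : ℝ) = 0 := by
      rw [← inner_sum, hT v, hv, inner_zero_right]
    have hzero : ∀ i ∈ s, (⟪v, bproj (g i) v⟫ : ℝ) = 0 := by
      intro i hi
      exact (Finset.sum_eq_zero_iff_of_nonneg
        (fun i hi => inner_bproj_nonneg (g i) v (hunit i hi))).mp hsum i hi
    have hpar : ∀ i ∈ s, ∃ r : ℝ, r ≠ 0 ∧ v = r • g i := by
      intro i hi
      have h1 : (⟪g i, v⟫ : ℝ) ^ 2 = ‖v‖ ^ 2 := by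
        have := hzero i hi
        rw [inner_bproj_self (g i) v (hunit i hi)] at this
        linarith
      have hgne : g i ≠ 0 :=
        norm_ne_zero_iff.mp (by rw [hunit i hi]; exact one_ne_zero)
      have h2 : ‖(⟪g i, v⟫ : ℝ)‖ = ‖g i‖ * ‖v‖ := by
        rw [hunit i hi, one_mul, Real.norm_eq_abs, ← Real.sqrt_sq_eq_abs, h1,
          Real.sqrt_sq (norm_nonneg v)]
      exact (norm_inner_eq_norm_iff hgne hv0).mp h2
    obtain ⟨r, hr, hvr⟩ := hpar j hj
    obtain ⟨r', hr', hvr'⟩ := hpar k hk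
    apply hnp (r'⁻¹ * r)
    rw [mul_smul, ← hvr, hvr', inv_smul_smul₀ hr']
  have hinj : Function.Injective T := by
    intro a b hab
    have : T (a - b) = 0 := by rw [map_sub, hab, sub_self]
    have := hker _ this
    rwa [sub_eq_zero] at this
  have hsurj : Function.Surjective T :=
    (LinearMap.injective_iff_surjective).mp hinj
  have : (fun v : EuclideanSpace ℝ (Fin d) => ∑ j ∈ s, bproj (g j) v) = T := by
    funext v; exact hT v
  rw [this]
  exact ⟨hinj, hsurj⟩

lemma realize_bproj_eq {d n : ℕ} {A : Fin n → Finset (Fin n)}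
    {gs : Fin n → Fin n → EuclideanSpace ℝ (Fin d)}
    {p : Fin n → EuclideanSpace ℝ (Fin d)} (hp : RealizesBearings A gs p)
    (i j : Fin n) (hj : j ∈ A i) :
    bproj (gs i j) (p i) = bproj (gs i j) (p j) := by
  obtain ⟨hne, hg⟩ := hp i j hj
  have hw : p j - p i ≠ 0 := sub_ne_zero.mpr hne.symm
  have hwn : ‖p j - p i‖ ≠ 0 := norm_ne_zero_iff.mpr hw
  have hge : p j - p i = ‖p j - p i‖ • gs i j := by
    rw [← hg, smul_inv_smul₀ hwn]
  have hgne : gs i j ≠ 0 := by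
    rw [← hg]; exact smul_ne_zero (inv_ne_zero hwn) hw
  have hz : bproj (gs i j) (p j) - bproj (gs i j) (p i) = 0 := by
    have h1 : bproj (gs i j) (p j) - bproj (gs i j) (p i) =
        bprojL (gs i j) (p j - p i) := (map_sub (bprojL (gs i j)) _ _).symm
    have h2 : bprojL (gs i j) (p j - p i) = 0 := by
      rw [show p j - p i = ‖p j - p i‖ • gs i j from hge, map_smul]
      show ‖p j - p i‖ • bproj (gs i j) (gs i j) = 0
      rw [bproj_self _ hgne, smul_zero]
    rw [h1, h2]
  exact (sub_eq_zero.mp hz).symm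

/-- Uniqueness of the target configuration for an ordered LFF graph: a
realizing configuration is uniquely determined by the leader position and the
leader–first-follower distance; moreover each follower position satisfies the
stated fixed-point equations. -/
theorem stmt11 (d n : ℕ) (hd : 2 ≤ d) (hn : 2 ≤ n)
    (A : Fin n → Finset (Fin n)) (hA : IsOrderedLFF n A)
    (gs : Fin n → Fin n → EuclideanSpace ℝ (Fin d))
    (hunit : ∀ i : Fin n, ∀ j ∈ A i, ‖gs i j‖ = 1)
    (hreal : ∃ p : Fin n → EuclideanSpace ℝ (Fin d), RealizesBearings A gs p)
    (hnp : ∀ i : Fin n, 2 ≤ i.val → ∀ j ∈ A i, ∀ k ∈ A i, j ≠ k →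
      ∀ c : ℝ, gs i k ≠ c • gs i j) :
    (∀ p q : Fin n → EuclideanSpace ℝ (Fin d),
      RealizesBearings A gs p → RealizesBearings A gs q →
      p ⟨0, by omega⟩ = q ⟨0, by omega⟩ →
      ‖p ⟨1, by omega⟩ - p ⟨0, by omega⟩‖ =
        ‖q ⟨1, by omega⟩ - q ⟨0, by omega⟩‖ →
      p = q) ∧
    (∀ p : Fin n → EuclideanSpace ℝ (Fin d), RealizesBearings A gs p →
      (p ⟨1, by omega⟩ = p ⟨0, by omega⟩ -
        ‖p ⟨1, by omega⟩ - p ⟨0, by omega⟩‖ • gs ⟨1, by omega⟩ ⟨0, by omega⟩) ∧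
      ∀ i : Fin n, 2 ≤ i.val →
        Function.Bijective
          (fun v : EuclideanSpace ℝ (Fin d) => ∑ j ∈ A i, bproj (gs i j) v) ∧
        (∑ j ∈ A i, bproj (gs i j) (p i)) = ∑ j ∈ A i, bproj (gs i j) (p j)) := by

  obtain ⟨hA0, hA1, hA2⟩ := hA
  have hmem : (⟨0, by omega⟩ : Fin n) ∈ A ⟨1, by omega⟩ :=
    (hA1 ⟨1, by omega⟩ rfl ⟨0, by omega⟩).mpr rfl
  have hp1 : ∀ p : Fin n → EuclideanSpace ℝ (Fin d), RealizesBearings A gs p →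
      p ⟨1, by omega⟩ = p ⟨0, by omega⟩ -
        ‖p ⟨1, by omega⟩ - p ⟨0, by omega⟩‖ • gs ⟨1, by omega⟩ ⟨0, by omega⟩ := by
    intro p hp
    obtain ⟨hne, hg⟩ := hp ⟨1, by omega⟩ ⟨0, by omega⟩ hmem
    have hw : p ⟨0, by omega⟩ - p ⟨1, by omega⟩ ≠ 0 := sub_ne_zero.mpr hne.symm
    have hwn : ‖p ⟨0, by omega⟩ - p ⟨1, by omega⟩‖ ≠ 0 := norm_ne_zero_iff.mpr hw
    have hge : p ⟨0, by omega⟩ - p ⟨1, by omega⟩ =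
        ‖p ⟨0, by omega⟩ - p ⟨1, by omega⟩‖ • gs ⟨1, by omega⟩ ⟨0, by omega⟩ := by
      rw [← hg, smul_inv_smul₀ hwn]
    rw [norm_sub_rev, ← hge]
    abel
  have hbij : ∀ i : Fin n, 2 ≤ i.val →
      Function.Bijective
        (fun v : EuclideanSpace ℝ (Fin d) => ∑ j ∈ A i, bproj (gs i j) v) := by
    intro i hi
    obtain ⟨hcard, hlt⟩ := hA2 i hi
    obtain ⟨j, hj, k, hk, hjk⟩ := Finset.one_lt_card.mp (show 1 < (A i).card by omega)
    exact sum_bproj_bijective (A i) (gs i) (hunit i) hj hk (hnp i hi j hj k hk hjk)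
  have hfp : ∀ p : Fin n → EuclideanSpace ℝ (Fin d), RealizesBearings A gs p →
      ∀ i : Fin n,
        (∑ j ∈ A i, bproj (gs i j) (p i)) = ∑ j ∈ A i, bproj (gs i j) (p j) :=
    fun p hp i => Finset.sum_congr rfl fun j hj => realize_bproj_eq hp i j hj
  refine ⟨?_, fun p hp => ⟨hp1 p hp, fun i hi => ⟨hbij i hi, hfp p hp i⟩⟩⟩
  intro p q hp hq h0 hnorm
  have key : ∀ m : ℕ, ∀ hm : m < n, p ⟨m, hm⟩ = q ⟨m, hm⟩ := by
    intro m
    induction m using Nat.strong_induction_on with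
    | _ m IH =>
      intro hm
      match m, hm, IH with
      | 0, hm, _ => exact h0
      | 1, hm, _ =>
        rw [hp1 p hp, hp1 q hq, hnorm, h0]
      | (m + 2), hm, IH =>
        set i : Fin n := ⟨m + 2, hm⟩ with hidef
        have hi : 2 ≤ i.val := Nat.le_add_left 2 m
        have hlt := (hA2 i hi).2
        have hsum : (∑ j ∈ A i, bproj (gs i j) (p i)) =
            ∑ j ∈ A i, bproj (gs i j) (q i) := by
          rw [hfp p hp i, hfp q hq i]
          refine Finset.sum_congr rfl fun j hj => ?_
          have hje : p ⟨j.val, j.isLt⟩ = q ⟨j.val, j.isLt⟩ :=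
            IH j.val (hlt j hj) j.isLt
          rw [Fin.eta] at hje
          rw [hje]
        exact (hbij i hi).1 hsum
  funext i
  have := key i.val i.isLt
  rwa [Fin.eta] at this
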